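/- arXiv:2510.26199 — 2 statements merged into one kernel-verified Lean document; each statement's English description precedes it below -/
import Mathlib

section
/- Let 𝒯 be a Hom-finite triangulated category over a field and E, F ∈ 𝒯 objects satisfying Hom(E, E[i]) = 0 for i > 0, Hom(F, F[i]) = 0 for i > 0, Hom(F, E[i]) = 0 for i > 0, and Hom(E, F[i]) = 0 for i > 1. Let Ē be the cone of a left (add F)-approximation E[-1] → F_0, so there is a triangle E[-1] → F_0 → Ē → E. Then Hom(Ē, Ē[i]) = 0, Hom(F, Ē[i]) = 0 and Hom(Ē, F[i]) = 0 for all i > 0. -/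
/-!
Maps out of `Ē` are killed by exactness of `Hom(-, Y)` along the triangle `E[-1] → F₀ → Ē → E`,
maps into `Ē[i]` by exactness of `Hom(X, -)` along its shift by `i`; since `F₀ ∈ add F`, every
vanishing for `F` passes to `F₀`. The one degree the hypotheses miss is `Hom(Ē, F[1])`: such a
map is `c ≫ g[1]` with `g : E[-1] → F`, and `g` factors through the approximation `a`, so the
map factors through `c ≫ a[1] = 0`.
-/

open CategoryTheory CategoryTheory.Limits CategoryTheory.Pretriangulated

/-- `X` belongs to `add F`: it is a direct summand of a finite direct sum of
copies of `F`. -/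
def InAdd {C : Type*} [Category C] [Preadditive C] [HasFiniteBiproducts C]
    (F X : C) : Prop :=
  ∃ (n : ℕ) (i : X ⟶ ⨁ (fun _ : Fin n => F)) (p : (⨁ fun _ : Fin n => F) ⟶ X),
    i ≫ p = 𝟙 X

section Additive

variable {C : Type*} [Category C] [Preadditive C]

lemma eq_zero_of_iso_source {X X' Y : C} (e : X ≅ X') (h : ∀ f : X ⟶ Y, f = 0)
    (f : X' ⟶ Y) : f = 0 := by
  rw [← e.inv_hom_id_assoc f, h (e.hom ≫ f), comp_zero]

lemma eq_zero_of_iso_target {X Y Y' : C} (e : Y ≅ Y') (h : ∀ f : X ⟶ Y, f = 0)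
    (f : X ⟶ Y') : f = 0 := by
  rw [← Category.comp_id f, ← e.inv_hom_id, ← Category.assoc, h (f ≫ e.inv), zero_comp]

variable [HasFiniteBiproducts C]

lemma inAdd_self (F : C) : InAdd F F :=
  ⟨1, biproduct.ι (fun _ : Fin 1 => F) 0, biproduct.π (fun _ : Fin 1 => F) 0, by simp⟩

lemma InAdd.map {D : Type*} [Category D] [Preadditive D] [HasFiniteBiproducts D]
    (G : C ⥤ D) [G.Additive] {F X : C} (h : InAdd F X) : InAdd (G.obj F) (G.obj X) := by
  obtain ⟨n, i, p, hip⟩ := h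
  exact ⟨n, G.map i ≫ (G.mapBiproduct _).hom, (G.mapBiproduct _).inv ≫ G.map p,
    by rw [Category.assoc, Iso.hom_inv_id_assoc, ← G.map_comp, hip, G.map_id]⟩

lemma InAdd.eq_zero_of_source {F X Y : C} (h : InAdd F X) (hF : ∀ g : F ⟶ Y, g = 0)
    (f : X ⟶ Y) : f = 0 := by
  obtain ⟨n, i, p, hip⟩ := h
  have hp : p ≫ f = 0 := by ext j; simp [hF]
  rw [← Category.id_comp f, ← hip, Category.assoc, hp, comp_zero]

lemma InAdd.eq_zero_of_target {F X Y : C} (h : InAdd F X) (hF : ∀ g : Y ⟶ F, g = 0)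
    (f : Y ⟶ X) : f = 0 := by
  obtain ⟨n, i, p, hip⟩ := h
  have hi : f ≫ i = 0 := by ext j; simp [hF]
  rw [← Category.comp_id f, ← hip, ← Category.assoc, hi, zero_comp]

end Additive

namespace CategoryTheory.Pretriangulated.Triangle

variable {C : Type*} [Category C] [Preadditive C] [HasZeroObject C] [HasShift C ℤ]
  [∀ n : ℤ, (CategoryTheory.shiftFunctor C n).Additive] [Pretriangulated C]
  {T : Triangle C}

lemma obj₃_hom_eq_zero (hT : T ∈ distTriang C) {Y : C} (h₂ : ∀ g : T.obj₂ ⟶ Y, g = 0)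
    (h₁ : ∀ g : T.obj₁⟦(1 : ℤ)⟧ ⟶ Y, g = 0) (f : T.obj₃ ⟶ Y) : f = 0 := by
  obtain ⟨g, rfl⟩ := T.yoneda_exact₃ hT f (h₂ _)
  rw [h₁ g, comp_zero]

lemma hom_shift_obj₃_eq_zero (hT : T ∈ distTriang C) (i : ℤ) {X : C}
    (h₂ : ∀ g : X ⟶ T.obj₂⟦i⟧, g = 0) (h₁ : ∀ g : X ⟶ T.obj₁⟦(1 : ℤ)⟧⟦i⟧, g = 0)
    (f : X ⟶ T.obj₃⟦i⟧) : f = 0 := by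
  have hTi := Triangle.shift_distinguished T hT i
  have hf : f ≫ ((Triangle.shiftFunctor C i).obj T).mor₃ = 0 := by
    -- the connecting map of `T⟦i⟧` is `T.mor₃⟦i⟧'` up to a sign and the iso `X⟦1⟧⟦i⟧ ≅ X⟦i⟧⟦1⟧`
    change f ≫ (i.negOnePow • (T.mor₃⟦i⟧' ≫ (shiftFunctorComm C 1 i).hom.app _)) = 0
    rw [Linear.comp_units_smul, ← Category.assoc, h₁ (f ≫ T.mor₃⟦i⟧'), zero_comp, smul_zero]
  obtain ⟨g, rfl⟩ := Triangle.coyoneda_exact₃ _ hTi f hf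
  exact (h₂ g).symm ▸ zero_comp

lemma obj₃_hom_shift_one_eq_zero (hT : T ∈ distTriang C) {Y : C}
    (hfactor : ∀ g : T.obj₁ ⟶ Y, ∃ h : T.obj₂ ⟶ Y, T.mor₁ ≫ h = g)
    (h₂ : ∀ g : T.obj₂ ⟶ Y⟦(1 : ℤ)⟧, g = 0) (f : T.obj₃ ⟶ Y⟦(1 : ℤ)⟧) : f = 0 := by
  obtain ⟨g, rfl⟩ := T.yoneda_exact₃ hT f (h₂ _)
  obtain ⟨g', rfl⟩ := (CategoryTheory.shiftFunctor C (1 : ℤ)).map_surjective g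
  obtain ⟨h, rfl⟩ := hfactor g'
  rw [Functor.map_comp, ← Category.assoc, comp_distTriang_mor_zero₃₁ T hT, zero_comp]

end CategoryTheory.Pretriangulated.Triangle

/-- Proposition `univan`, universal extension part: in a
Hom-finite triangulated category `𝒯` over a field `k`, if `E, F` satisfy
`Hom(E,E[>0]) = Hom(F,F[>0]) = Hom(F,E[>0]) = 0` and `Hom(E,F[>1]) = 0`, and
`Ē` is the cone of a left `add F`-approximation `E[-1] → F₀`, sitting in a
distinguished triangle `E[-1] → F₀ → Ē → E`, then
`Hom(Ē,Ē[>0]) = Hom(F,Ē[>0]) = Hom(Ē,F[>0]) = 0`. -/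
theorem universal_extension_vanishing
    (k : Type) [Field k] (C : Type) [Category.{0} C] [Preadditive C]
    [Linear k C] [HasZeroObject C] [HasShift C ℤ]
    [∀ n : ℤ, (CategoryTheory.shiftFunctor C n).Additive] [Pretriangulated C]
    [HasFiniteBiproducts C]
    (homFinite : ∀ X Y : C, FiniteDimensional k (X ⟶ Y))
    (E F F₀ Ebar : C)
    (hEE : ∀ i : ℤ, 0 < i → ∀ f : E ⟶ E⟦i⟧, f = 0)
    (hFF : ∀ i : ℤ, 0 < i → ∀ f : F ⟶ F⟦i⟧, f = 0)
    (hFE : ∀ i : ℤ, 0 < i → ∀ f : F ⟶ E⟦i⟧, f = 0)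
    (hEF : ∀ i : ℤ, 1 < i → ∀ f : E ⟶ F⟦i⟧, f = 0)
    (a : E⟦(-1 : ℤ)⟧ ⟶ F₀) (hF₀ : InAdd F F₀)
    (happrox : ∀ F' : C, InAdd F F' → ∀ g : E⟦(-1 : ℤ)⟧ ⟶ F',
      ∃ h : F₀ ⟶ F', a ≫ h = g)
    (b : F₀ ⟶ Ebar) (c : Ebar ⟶ (E⟦(-1 : ℤ)⟧)⟦(1 : ℤ)⟧)
    (htri : Triangle.mk a b c ∈ distinguishedTriangles) :
    (∀ i : ℤ, 0 < i → ∀ f : Ebar ⟶ Ebar⟦i⟧, f = 0) ∧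
      (∀ i : ℤ, 0 < i → ∀ f : F ⟶ Ebar⟦i⟧, f = 0) ∧
      (∀ i : ℤ, 0 < i → ∀ f : Ebar ⟶ F⟦i⟧, f = 0) := by
  let e : E⟦(-1 : ℤ)⟧⟦(1 : ℤ)⟧ ≅ E := (shiftFunctorCompIsoId C (-1 : ℤ) 1 (by norm_num)).app E
  have hEbarE : ∀ i : ℤ, 0 < i → ∀ f : Ebar ⟶ E⟦i⟧, f = 0 := fun i hi =>
    Triangle.obj₃_hom_eq_zero htri (hF₀.eq_zero_of_source (hFE i hi))
      (eq_zero_of_iso_source e.symm (hEE i hi))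
  have hEbarF : ∀ i : ℤ, 0 < i → ∀ f : Ebar ⟶ F⟦i⟧, f = 0 := by
    intro i hi
    obtain rfl | hi₁ := (Int.add_one_le_of_lt hi).eq_or_lt
    · exact Triangle.obj₃_hom_shift_one_eq_zero htri (happrox F (inAdd_self F))
        (hF₀.eq_zero_of_source (hFF 1 one_pos))
    · exact Triangle.obj₃_hom_eq_zero htri (hF₀.eq_zero_of_source (hFF i hi))
        (eq_zero_of_iso_source e.symm (hEF i hi₁))
  have hshiftF₀ (i : ℤ) : InAdd (F⟦i⟧) (F₀⟦i⟧) := hF₀.map (shiftFunctor C i)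
  refine ⟨fun i hi => ?_, fun i hi => ?_, hEbarF⟩
  · exact Triangle.hom_shift_obj₃_eq_zero htri i ((hshiftF₀ i).eq_zero_of_target (hEbarF i hi))
      (eq_zero_of_iso_target ((shiftFunctor C i).mapIso e).symm (hEbarE i hi))
  · exact Triangle.hom_shift_obj₃_eq_zero htri i ((hshiftF₀ i).eq_zero_of_target (hFF i hi))
      (eq_zero_of_iso_target ((shiftFunctor C i).mapIso e).symm (hFE i hi))
end

section
/- Let 𝒯 be a Hom-finite Krull–Schmidt triangulated category and E, F indecomposable objects with Hom(E,E[>0]) = Hom(F,F[>0]) = Hom(F,E[≥0]) = 0, Hom(E,F[>1]) = 0, and E ≇ F[1]. Let Ē be the universal extension of E by F. Then Ē ≅ Ē_0^{⊕m} ⊕ F^{⊕n} for some indecomposable object Ē_0, some m ≥ 1 and n ≥ 0. In particular Ē ⊕ F has exactly two indecomposable direct summands up to isomorphism. -/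
/-!
Let `d : Ē ⟶ E` be the connecting morphism of the triangle `F₀ ⟶ Ē ⟶ E ⟶ F₀⟦1⟧`. Since
`Hom(F₀, E) = 0`, every morphism `Ē ⟶ E` factors as `d ≫ φ` with `φ ∈ End E`. Decompose `Ē`
into indecomposables. If two summands both had nonzero composite with `d`, projecting onto the
first and factoring through `d` would give `φ` fixing one composite and killing the other;
as `End E` is local, `φ` or `1 - φ` is invertible, which is absurd. So at most one summand
`Ē₀` is not killed by `d`, and every other summand lifts to `F₀`, hence is a retract of
`F₀ ∈ add F`, hence isomorphic to `F` because endomorphism rings are local. Finally `Ē ≠ 0`,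
for otherwise `E⟦-1⟧ ≅ F₀` would be isomorphic to `F`.
-/

open CategoryTheory CategoryTheory.Limits CategoryTheory.Pretriangulated

/-- an object is indecomposable if it is nonzero and any biproduct
decomposition has a zero factor -/
def IndecObj {C : Type*} [Category C] [Preadditive C] [HasZeroObject C]
    [HasBinaryBiproducts C] (X : C) : Prop :=
  ¬ IsZero X ∧ ∀ (Y Z : C), (X ≅ Y ⊞ Z) → IsZero Y ∨ IsZero Z

namespace CategoryTheory

section Preadditive

variable {C : Type*} [Category C] [Preadditive C]

lemma Retract.nonempty_iso_of_isLocalRing {X Y : C} (h : Retract X Y) (hX : ¬ IsZero X)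
    [IsLocalRing (End Y)] : Nonempty (X ≅ Y) := by
  let e : End Y := h.r ≫ h.i
  rcases IsLocalRing.isUnit_or_isUnit_of_add_one (add_sub_cancel e 1) with hu | hu
  · have := (isUnit_iff_isIso _).1 hu
    have : Epi h.i := epi_of_epi h.r h.i
    have : IsSplitMono h.i := ⟨⟨⟨h.r, h.retract⟩⟩⟩
    have := isIso_of_epi_of_isSplitMono h.i
    exact ⟨asIso h.i⟩
  · have := (isUnit_iff_isIso _).1 hu
    have hi : h.i = 0 := by
      rw [← cancel_mono (𝟙 Y - h.r ≫ h.i), zero_comp, Preadditive.comp_sub,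
        h.retract_assoc, Category.comp_id, sub_self]
    refine absurd ((IsZero.iff_id_eq_zero X).2 ?_) hX
    rw [← h.retract, hi, zero_comp]

lemma Retract.exists_retract_summand_of_isLocalRing {ι : Type} [Fintype ι] {X : C} {Z : ι → C}
    [HasBiproduct Z] (h : Retract X (⨁ Z)) [IsLocalRing (End X)] :
    ∃ t, Nonempty (Retract X (Z t)) := by
  have htotal : (∑ t, (h.i ≫ biproduct.π Z t) ≫ (biproduct.ι Z t ≫ h.r) : End X) = 1 := by
    calc _ = h.i ≫ (∑ t, biproduct.π Z t ≫ biproduct.ι Z t) ≫ h.r := by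
          simp only [Preadditive.comp_sum, Preadditive.sum_comp, Category.assoc]
      _ = 𝟙 X := by rw [biproduct.total, Category.id_comp, h.retract]
  obtain ⟨t, -, ht⟩ := IsLocalRing.exists_of_isUnit_sum (htotal ▸ isUnit_one)
  have := (isUnit_iff_isIso _).1 ht
  exact ⟨t, ⟨⟨h.i ≫ biproduct.π Z t,
    biproduct.ι Z t ≫ h.r ≫ inv ((h.i ≫ biproduct.π Z t) ≫ (biproduct.ι Z t ≫ h.r)),
    by simp [← Category.assoc]⟩⟩⟩

lemma comp_eq_zero_of_comp_ne_zero_of_isLocalRing {R Y Z₁ Z₂ : C} [IsLocalRing (End Y)]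
    (d : R ⟶ Y) (hd : ∀ f : R ⟶ Y, ∃ φ : Y ⟶ Y, f = d ≫ φ) {ι₁ : Z₁ ⟶ R} {π₁ : R ⟶ Z₁}
    {ι₂ : Z₂ ⟶ R} (h₁ : ι₁ ≫ π₁ = 𝟙 Z₁) (h₂ : ι₂ ≫ π₁ = 0) (hne : ι₁ ≫ d ≠ 0) :
    ι₂ ≫ d = 0 := by
  obtain ⟨φ, hφ⟩ := hd (π₁ ≫ ι₁ ≫ d)
  have hfix : ι₁ ≫ d ≫ φ = ι₁ ≫ d := by rw [← hφ, reassoc_of% h₁]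
  have hkill : ι₂ ≫ d ≫ φ = 0 := by rw [← hφ, reassoc_of% h₂, zero_comp]
  rcases IsLocalRing.isUnit_or_isUnit_of_add_one (add_sub_cancel (show End Y from φ) 1)
    with hu | hu
  · have := (isUnit_iff_isIso _).1 hu
    rw [← cancel_mono φ, Category.assoc, hkill, zero_comp]
  · have : IsIso (𝟙 Y - φ) := (isUnit_iff_isIso _).1 hu
    refine absurd ?_ hne
    rw [← cancel_mono (𝟙 Y - φ), zero_comp, Category.assoc, Preadditive.comp_sub,
      Preadditive.comp_sub, hfix, Category.comp_id, sub_self]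

lemma biproduct.exists_forall_ne_ι_comp_eq_zero {ι : Type*} [Nonempty ι] {Y : C}
    [IsLocalRing (End Y)] (Z : ι → C) [HasBiproduct Z] (d : ⨁ Z ⟶ Y)
    (hd : ∀ f : ⨁ Z ⟶ Y, ∃ φ : Y ⟶ Y, f = d ≫ φ) :
    ∃ i₀, ∀ j ≠ i₀, biproduct.ι Z j ≫ d = 0 := by
  by_cases h : ∃ i₀, biproduct.ι Z i₀ ≫ d ≠ 0
  · obtain ⟨i₀, hi₀⟩ := h
    exact ⟨i₀, fun j hj => comp_eq_zero_of_comp_ne_zero_of_isLocalRing d hd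
      (biproduct.ι_π_self Z i₀) (biproduct.ι_π_ne Z hj) hi₀⟩
  · simp only [ne_eq, not_exists, not_not] at h
    exact ⟨Classical.arbitrary ι, fun j _ => h j⟩

noncomputable def biproduct.isoBiprodSuccAbove [HasFiniteBiproducts C] [HasBinaryBiproducts C]
    {n : ℕ} (Z : Fin (n + 1) → C) (i₀ : Fin (n + 1)) :
    ⨁ Z ≅ Z i₀ ⊞ ⨁ fun j => Z (i₀.succAbove j) :=
  biprod.uniqueUpToIso _ _ (b :=
    { pt := ⨁ Z
      fst := biproduct.π Z i₀
      snd := biproduct.lift fun j => biproduct.π Z (i₀.succAbove j)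
      inl := biproduct.ι Z i₀
      inr := biproduct.desc fun j => biproduct.ι Z (i₀.succAbove j)
      inl_fst := by simp
      inl_snd := by ext j; simp [biproduct.ι_π_ne Z (i₀.succAbove_ne j).symm]
      inr_fst := by ext j; simp [biproduct.ι_π_ne Z (i₀.succAbove_ne j)]
      inr_snd := by ext j j'; simp [biproduct.ι_π] })
    (isBinaryBilimitOfTotal _ (by
      rw [biproduct.lift_desc,
        ← Fin.sum_univ_succAbove (fun t => biproduct.π Z t ≫ biproduct.ι Z t) i₀,
        biproduct.total]))

end Preadditive

end CategoryTheory

lemma IndecObj.map {C D : Type*} [Category C] [Category D] [Preadditive C] [Preadditive D]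
    [HasZeroObject C] [HasZeroObject D] [HasBinaryBiproducts C] [HasBinaryBiproducts D]
    (G : C ⥤ D) [G.Additive] [G.Full] [G.Faithful] [G.EssSurj] {X : C}
    (hX : IndecObj X) : IndecObj (G.obj X) := by
  refine ⟨fun h => hX.1 (IsZero.of_full_of_faithful_of_isZero G X h), fun Y W w => ?_⟩
  have := preservesBinaryBiproducts_of_preservesBiproducts G
  have e : G.obj X ≅ G.obj (G.objPreimage Y ⊞ G.objPreimage W) :=
    w ≪≫ biprod.mapIso (G.objObjPreimageIso Y).symm (G.objObjPreimageIso W).symm ≪≫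
      (G.mapBiprod _ _).symm
  refine (hX.2 _ _ (G.preimageIso e)).imp (fun h => ?_) (fun h => ?_)
  · exact (G.map_isZero h).of_iso (G.objObjPreimageIso Y).symm
  · exact (G.map_isZero h).of_iso (G.objObjPreimageIso W).symm

namespace InAdd

section Preadditive

variable {C : Type*} [Category C] [Preadditive C] [HasFiniteBiproducts C] {F X Y : C}

lemma of_retract (h : Retract X Y) (hY : InAdd F Y) : InAdd F X := by
  obtain ⟨n, i, p, hip⟩ := hY
  exact ⟨n, h.i ≫ i, p ≫ h.r, by simp [reassoc_of% hip]⟩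

lemma eq_zero_of_forall_eq_zero (hX : InAdd F X) (hF : ∀ g : F ⟶ Y, g = 0) (g : X ⟶ Y) :
    g = 0 := by
  obtain ⟨n, i, p, hip⟩ := hX
  have hp : p ≫ g = 0 := biproduct.hom_ext' _ _ fun t => by rw [comp_zero]; exact hF _
  rw [← Category.id_comp g, ← hip, Category.assoc, hp, comp_zero]

lemma nonempty_iso [IsLocalRing (End X)] [IsLocalRing (End F)] (hX : InAdd F X) :
    Nonempty (X ≅ F) := by
  obtain ⟨n, i, p, hip⟩ := hX
  obtain ⟨t, ⟨h⟩⟩ := Retract.exists_retract_summand_of_isLocalRing ⟨i, p, hip⟩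
  exact h.nonempty_iso_of_isLocalRing fun hz =>
    one_ne_zero (α := End X) ((IsZero.iff_id_eq_zero X).1 hz)

end Preadditive

section Pretriangulated

variable {C : Type*} [Category C] [Preadditive C] [HasZeroObject C] [HasShift C ℤ]
  [∀ n : ℤ, (shiftFunctor C n).Additive] [Pretriangulated C] [HasFiniteBiproducts C]
  {T : Triangle C} {F : C}

lemma of_retract_of_comp_mor₃_eq_zero (hT : T ∈ distTriang C) (h₂ : InAdd F T.obj₂) {Z : C}
    (h : Retract Z T.obj₃) (hz : h.i ≫ T.mor₃ = 0) : InAdd F Z := by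
  obtain ⟨s, hs⟩ := Triangle.coyoneda_exact₃ T hT h.i hz
  exact h₂.of_retract ⟨s, T.mor₂ ≫ h.r, by rw [← Category.assoc, ← hs, h.retract]⟩

lemma obj₁_of_isZero_obj₃ (hT : T ∈ distTriang C) (h₂ : InAdd F T.obj₂)
    (h₃ : IsZero T.obj₃) : InAdd F T.obj₁ := by
  have := (Triangle.isZero₃_iff_isIso₁ T hT).1 h₃
  exact h₂.of_retract (Retract.ofIso (asIso T.mor₁))

end Pretriangulated

end InAdd

/-- Proposition `uniind`(1): in a Hom-finite Krull–Schmidt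
triangulated category, for indecomposable `E, F` with
`Hom(E,E[>0]) = Hom(F,F[>0]) = Hom(F,E[≥0]) = 0`, `Hom(E,F[>1]) = 0` and
`E ≇ F[1]`, the universal extension `Ē` of `E` by `F` satisfies
`Ē ≅ Ē₀^{⊕m} ⊕ F^{⊕n}` with `Ē₀` indecomposable, `m ≥ 1`, `n ≥ 0`; in
particular `Ē ⊕ F` has exactly two indecomposable summands up to isomorphism. -/
theorem universal_extension_decomposition
    (k : Type) [Field k] (C : Type) [Category.{0} C] [Preadditive C]
    [Linear k C] [HasZeroObject C] [HasShift C ℤ]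
    [∀ n : ℤ, (CategoryTheory.shiftFunctor C n).Additive] [Pretriangulated C]
    [HasFiniteBiproducts C]
    (homFinite : ∀ X Y : C, FiniteDimensional k (X ⟶ Y))
    -- the Krull–Schmidt property
    (hKS : ∀ X : C, ∃ (n : ℕ) (f : Fin n → C),
      (∀ i, IndecObj (f i)) ∧ Nonempty (X ≅ ⨁ f))
    (hlocal : ∀ X : C, IndecObj X → IsLocalRing (End X))
    (E F F₀ Ebar : C) (hE : IndecObj E) (hF : IndecObj F)
    (hEE : ∀ i : ℤ, 0 < i → ∀ f : E ⟶ E⟦i⟧, f = 0)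
    (hFF : ∀ i : ℤ, 0 < i → ∀ f : F ⟶ F⟦i⟧, f = 0)
    (hFE : ∀ i : ℤ, 0 < i → ∀ f : F ⟶ E⟦i⟧, f = 0)
    (hFE0 : ∀ f : F ⟶ E, f = 0)
    (hEF : ∀ i : ℤ, 1 < i → ∀ f : E ⟶ F⟦i⟧, f = 0)
    (hne : IsEmpty (E ≅ F⟦(1 : ℤ)⟧))
    (a : E⟦(-1 : ℤ)⟧ ⟶ F₀) (hF₀ : InAdd F F₀)
    (happrox : ∀ F' : C, InAdd F F' → ∀ g : E⟦(-1 : ℤ)⟧ ⟶ F',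
      ∃ h : F₀ ⟶ F', a ≫ h = g)
    (b : F₀ ⟶ Ebar) (c : Ebar ⟶ (E⟦(-1 : ℤ)⟧)⟦(1 : ℤ)⟧)
    (htri : Triangle.mk a b c ∈ distinguishedTriangles) :
    ∃ (Ebar₀ : C) (m n : ℕ), IndecObj Ebar₀ ∧ 1 ≤ m ∧
      Nonempty (Ebar ≅ (⨁ fun _ : Fin m => Ebar₀) ⊞ (⨁ fun _ : Fin n => F)) := by
  have := hlocal F hF
  have := hlocal _ ((hE.map (shiftFunctor C (-1 : ℤ))).map (shiftFunctor C (1 : ℤ)))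
  have hF₀E : ∀ g : F₀ ⟶ E⟦(-1 : ℤ)⟧⟦(1 : ℤ)⟧, g = 0 := hF₀.eq_zero_of_forall_eq_zero fun g =>
    (cancel_mono (shiftNegShift E (1 : ℤ)).hom).1 (by rw [hFE0 (g ≫ _), zero_comp])
  have hEbar : ¬ IsZero Ebar := fun hz => by
    have := hlocal _ (hE.map (shiftFunctor C (-1 : ℤ)))
    have hE₁ : InAdd F (E⟦(-1 : ℤ)⟧) := InAdd.obj₁_of_isZero_obj₃ htri hF₀ hz
    obtain ⟨w⟩ := hE₁.nonempty_iso
    exact hne.elim ((shiftNegShift E (1 : ℤ)).symm ≪≫ (shiftFunctor C (1 : ℤ)).mapIso w)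
  obtain ⟨N, Z, hZ, ⟨e⟩⟩ := hKS Ebar
  obtain ⟨n, rfl⟩ : ∃ n, N = n + 1 := Nat.exists_eq_add_one_of_ne_zero fun hN => hEbar <| by
    subst hN
    exact ((IsZero.iff_id_eq_zero _).2 (biproduct.hom_ext' _ _ fun j => j.elim0)).of_iso e
  obtain ⟨i₀, hi₀⟩ := biproduct.exists_forall_ne_ι_comp_eq_zero Z (e.inv ≫ c) fun f => by
    obtain ⟨φ, hφ⟩ : ∃ φ : E⟦(-1 : ℤ)⟧⟦(1 : ℤ)⟧ ⟶ E⟦(-1 : ℤ)⟧⟦(1 : ℤ)⟧, e.hom ≫ f = c ≫ φ :=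
      Triangle.yoneda_exact₃ _ htri _ (hF₀E _)
    exact ⟨φ, by rw [Category.assoc, ← hφ, Iso.inv_hom_id_assoc]⟩
  have hZF : ∀ j ≠ i₀, Nonempty (Z j ≅ F) := fun j hj => by
    have := hlocal _ (hZ j)
    have hZj : InAdd F (Z j) := InAdd.of_retract_of_comp_mor₃_eq_zero htri hF₀
      (Retract.mk (Y := Ebar) (biproduct.ι Z j ≫ e.inv) (e.hom ≫ biproduct.π Z j) (by simp))
      ((Category.assoc _ _ _).trans (hi₀ j hj))
    exact hZj.nonempty_iso
  exact ⟨Z i₀, 1, n, hZ i₀, le_rfl, ⟨e ≪≫ biproduct.isoBiprodSuccAbove Z i₀ ≪≫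
    biprod.mapIso (biproductUniqueIso fun _ : Fin 1 => Z i₀).symm
      (biproduct.mapIso fun j => (hZF _ (i₀.succAbove_ne j)).some)⟩⟩
end
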